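/- arXiv:0807.3978 — 9 statements merged into one kernel-verified Lean document; each statement's English description precedes it below -/
import Mathlib

section
/- Two directed sets P and Q are Tukey equivalent (P ≤_T Q and Q ≤_T P) if and only if there exist a directed set R and order embeddings of P and of Q onto cofinal subsets of R. -/
open Cardinal

/-- A subset `S` of a quasiorder `⟨α, r⟩` is bounded if it has an upper bound. -/
def TBounded {α : Type*} (r : α → α → Prop) (S : Set α) : Prop :=
  ∃ b, ∀ x ∈ S, r x b

/-- A subset `C` of `⟨α, r⟩` is cofinal if every element lies below a member of `C`. -/
def TCofinal {α : Type*} (r : α → α → Prop) (C : Set α) : Prop :=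
  ∀ x, ∃ c ∈ C, r x c

/-- A Tukey map: the image of every unbounded set is unbounded. -/
def IsTukeyMap {α β : Type*} (ra : α → α → Prop) (rb : β → β → Prop) (f : α → β) : Prop :=
  ∀ S : Set α, ¬ TBounded ra S → ¬ TBounded rb (f '' S)

/-- Tukey reducibility `P ≤_T Q`: there is a Tukey map from `P` to `Q`. -/
def TukeyLE {α β : Type*} (ra : α → α → Prop) (rb : β → β → Prop) : Prop :=
  ∃ f : α → β, IsTukeyMap ra rb f

/-- Tukey equivalence `P ≡_T Q`. -/
def TukeyEquiv {α β : Type*} (ra : α → α → Prop) (rb : β → β → Prop) : Prop :=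
  TukeyLE ra rb ∧ TukeyLE rb ra

/-- Strict Tukey reducibility `P <_T Q`. -/
def TukeyLT {α β : Type*} (ra : α → α → Prop) (rb : β → β → Prop) : Prop :=
  TukeyLE ra rb ∧ ¬ TukeyLE rb ra

/-- A directed set: a preorder in which every finite subset (in particular `∅` and pairs)
has an upper bound; equivalently, a nonempty directed preorder. -/
structure IsDirectedSet {α : Type*} (r : α → α → Prop) : Prop where
  nonempty : Nonempty α
  refl : ∀ x, r x x
  trans : ∀ {x y z}, r x y → r y z → r x z
  directed : ∀ x y, ∃ z, r x z ∧ r y z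

/-! A Tukey map `f : P → Q` has bounded fibres `{p | f p ≤ q}`, so choosing bounds gives a
map `g : Q → P` with `f p ≤ q → p ≤ g q`. Given Tukey maps both ways and using directedness,
such pairs can be merged into `k : P → Q`, `g : Q → P` with `k p ≤ q → p ≤ g q` and
`g q ≤ p → q ≤ k p`. Ordering `P ⊕ Q` by declaring `p ≤ q` iff `k p' ≤ q` for some `p' ≥ p`
(and symmetrically) then gives a directed set in which both summands are cofinal.
Conversely, if `P` and `Q` sit cofinally in `R`, sending `p` to any `q` above it in `R` is a
Tukey map. -/

section

variable {α β : Type*} {ra : α → α → Prop} {rb : β → β → Prop}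

theorem TukeyLE.exists_galois (h : TukeyLE ra rb) :
    ∃ (f : α → β) (g : β → α), ∀ a b, rb (f a) b → ra a (g b) := by
  obtain ⟨f, hf⟩ := h
  have bounded_fiber : ∀ b, TBounded ra {a | rb (f a) b} := fun b => by
    by_contra hb
    exact hf _ hb ⟨b, by rintro _ ⟨a, ha, rfl⟩; exact ha⟩
  choose g hg using bounded_fiber
  exact ⟨f, g, fun a b hab => hg b a hab⟩

theorem TukeyEquiv.exists_galois_pair (hα : IsDirectedSet ra) (hβ : IsDirectedSet rb)
    (hαβ : TukeyEquiv ra rb) :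
    ∃ (k : α → β) (g : β → α),
      (∀ a b, rb (k a) b → ra a (g b)) ∧ (∀ a b, ra (g b) a → rb b (k a)) := by
  obtain ⟨f, g₀, hfg₀⟩ := hαβ.1.exists_galois
  obtain ⟨h, k₀, hhk₀⟩ := hαβ.2.exists_galois
  choose k hfk hk₀k using fun a => hβ.directed (f a) (k₀ a)
  choose g hhg hg₀g using fun b => hα.directed (h b) (g₀ b)
  exact ⟨k, g, fun a b hab => hα.trans (hfg₀ a b (hβ.trans (hfk a) hab)) (hg₀g b),
    fun a b hba => hβ.trans (hhk₀ b a (hα.trans (hhg b) hba)) (hk₀k a)⟩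

variable (ra rb) in
/-- The existential in the mixed cases makes the relation transitive without `k` or `g`
being monotone. -/
def amalgamRel (k : α → β) (g : β → α) : α ⊕ β → α ⊕ β → Prop
  | .inl a, .inl a' => ra a a'
  | .inl a, .inr b => ∃ a', ra a a' ∧ rb (k a') b
  | .inr b, .inl a => ∃ b', rb b b' ∧ ra (g b') a
  | .inr b, .inr b' => rb b b'

variable {k : α → β} {g : β → α}

theorem amalgamRel_trans (hα : IsDirectedSet ra) (hβ : IsDirectedSet rb)
    (hkg : ∀ a b, rb (k a) b → ra a (g b)) (hgk : ∀ a b, ra (g b) a → rb b (k a)) :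
    ∀ {x y z}, amalgamRel ra rb k g x y → amalgamRel ra rb k g y z →
      amalgamRel ra rb k g x z := by
  rintro (a | b) (a' | b') (a'' | b'') hxy hyz
  · exact hα.trans hxy hyz
  · obtain ⟨a₁, ha₁, hk⟩ := hyz
    exact ⟨a₁, hα.trans hxy ha₁, hk⟩
  · obtain ⟨a₁, ha₁, hk⟩ := hxy
    obtain ⟨b₁, hb₁, hg⟩ := hyz
    exact hα.trans ha₁ (hα.trans (hkg a₁ b₁ (hβ.trans hk hb₁)) hg)
  · obtain ⟨a₁, ha₁, hk⟩ := hxy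
    exact ⟨a₁, ha₁, hβ.trans hk hyz⟩
  · obtain ⟨b₁, hb₁, hg⟩ := hxy
    exact ⟨b₁, hb₁, hα.trans hg hyz⟩
  · obtain ⟨b₁, hb₁, hg⟩ := hxy
    obtain ⟨a₁, ha₁, hk⟩ := hyz
    exact hβ.trans hb₁ (hβ.trans (hgk a₁ b₁ (hα.trans hg ha₁)) hk)
  · obtain ⟨b₁, hb₁, hg⟩ := hyz
    exact ⟨b₁, hβ.trans hxy hb₁, hg⟩
  · exact hβ.trans hxy hyz

theorem amalgamRel_directed (hα : IsDirectedSet ra) (hβ : IsDirectedSet rb) :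
    ∀ x y, ∃ z, amalgamRel ra rb k g x z ∧ amalgamRel ra rb k g y z := by
  rintro (a | b) (a' | b')
  · obtain ⟨a'', h, h'⟩ := hα.directed a a'
    exact ⟨.inl a'', h, h'⟩
  · obtain ⟨b'', h, h'⟩ := hβ.directed (k a) b'
    exact ⟨.inr b'', ⟨a, hα.refl a, h⟩, h'⟩
  · obtain ⟨b'', h, h'⟩ := hβ.directed (k a') b
    exact ⟨.inr b'', h', ⟨a', hα.refl a', h⟩⟩
  · obtain ⟨b'', h, h'⟩ := hβ.directed b b'
    exact ⟨.inr b'', h, h'⟩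

theorem isDirectedSet_amalgamRel (hα : IsDirectedSet ra) (hβ : IsDirectedSet rb)
    (hkg : ∀ a b, rb (k a) b → ra a (g b)) (hgk : ∀ a b, ra (g b) a → rb b (k a)) :
    IsDirectedSet (amalgamRel ra rb k g) where
  nonempty := hα.nonempty.map Sum.inl
  refl
    | .inl a => hα.refl a
    | .inr b => hβ.refl b
  trans := amalgamRel_trans hα hβ hkg hgk
  directed := amalgamRel_directed hα hβ

theorem tcofinal_amalgamRel_range_inl (hra : ∀ a, ra a a) (hrb : ∀ b, rb b b) :
    TCofinal (amalgamRel ra rb k g) (Set.range Sum.inl)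
  | .inl a => ⟨.inl a, ⟨a, rfl⟩, hra a⟩
  | .inr b => ⟨.inl (g b), ⟨g b, rfl⟩, b, hrb b, hra (g b)⟩

theorem tcofinal_amalgamRel_range_inr (hra : ∀ a, ra a a) (hrb : ∀ b, rb b b) :
    TCofinal (amalgamRel ra rb k g) (Set.range Sum.inr)
  | .inl a => ⟨.inr (k a), ⟨k a, rfl⟩, a, hra a, hrb (k a)⟩
  | .inr b => ⟨.inr b, ⟨b, rfl⟩, hrb b⟩

theorem tukeyLE_of_tcofinal_range {γ : Type*} {rc : γ → γ → Prop} [IsTrans γ rc]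
    {ea : α → γ} {eb : β → γ} (hea : ∀ a a', rc (ea a) (ea a') → ra a a')
    (heb : ∀ b b', rb b b' → rc (eb b) (eb b'))
    (ha : TCofinal rc (Set.range ea)) (hb : TCofinal rc (Set.range eb)) :
    TukeyLE ra rb := by
  have above : ∀ a, ∃ b, rc (ea a) (eb b) := fun a => by
    obtain ⟨_, ⟨b, rfl⟩, hab⟩ := hb (ea a)
    exact ⟨b, hab⟩
  choose f hf using above
  refine ⟨f, fun S hS ⟨b, hbS⟩ => hS ?_⟩
  obtain ⟨_, ⟨a₀, rfl⟩, hba₀⟩ := ha (eb b)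
  exact ⟨a₀, fun a haS =>
    hea a a₀ (_root_.trans (_root_.trans (hf a) (heb _ _ (hbS _ ⟨a, haS, rfl⟩))) hba₀)⟩

end

/-- Tukey's theorem: two directed sets are Tukey equivalent iff they order embed as
cofinal subsets of a common directed set. -/
theorem stmt2 {P Q : Type} (rP : P → P → Prop) (rQ : Q → Q → Prop)
    (hP : IsDirectedSet rP) (hQ : IsDirectedSet rQ) :
    TukeyEquiv rP rQ ↔
      ∃ (R : Type) (rR : R → R → Prop), IsDirectedSet rR ∧
        ∃ (eP : P → R) (eQ : Q → R),
          Function.Injective eP ∧ Function.Injective eQ ∧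
          (∀ x y, rP x y ↔ rR (eP x) (eP y)) ∧
          (∀ x y, rQ x y ↔ rR (eQ x) (eQ y)) ∧
          TCofinal rR (Set.range eP) ∧ TCofinal rR (Set.range eQ) := by
  constructor
  · intro h
    obtain ⟨k, g, hkg, hgk⟩ := h.exists_galois_pair hP hQ
    exact ⟨P ⊕ Q, amalgamRel rP rQ k g, isDirectedSet_amalgamRel hP hQ hkg hgk,
      Sum.inl, Sum.inr, Sum.inl_injective, Sum.inr_injective,
      fun _ _ => Iff.rfl, fun _ _ => Iff.rfl,
      tcofinal_amalgamRel_range_inl hP.refl hQ.refl,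
      tcofinal_amalgamRel_range_inr hP.refl hQ.refl⟩
  · rintro ⟨R, rR, hR, eP, eQ, -, -, hePQ, heQ, hPcof, hQcof⟩
    have : IsTrans R rR := ⟨fun _ _ _ => hR.trans⟩
    exact ⟨tukeyLE_of_tcofinal_range (fun _ _ => (hePQ _ _).2) (fun _ _ => (heQ _ _).1)
        hPcof hQcof,
      tukeyLE_of_tcofinal_range (fun _ _ => (heQ _ _).2) (fun _ _ => (hePQ _ _).1)
        hQcof hPcof⟩
end

section
/- For all infinite sets A and B, ⟨[A]^{<ω}, ⊆⟩ ≤_T ⟨[B]^{<ω}, ⊆⟩ if and only if the cardinality of A is at most the cardinality of B. -/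
open Cardinal

/-! An injection `A ↪ B` induces the Tukey map `s ↦ s.map f`, since a bound `b` of the images
pulls back to the bound `b.preimage f`. Conversely, if `F` is a Tukey map then each fibre of
`a ↦ F {a}` is finite: it is the set of singletons sent below a single element, and a bounded family
of finite sets has finite union. So `#A ≤ #(Finset B) * ℵ₀ = #B` for infinite `B`. -/

universe u

theorem TBounded.mono {α : Type*} {r : α → α → Prop} {S T : Set α} (hST : S ⊆ T)
    (hT : TBounded r T) : TBounded r S :=
  let ⟨b, hb⟩ := hT
  ⟨b, fun x hx => hb x (hST hx)⟩

theorem IsTukeyMap.tBounded_preimage {α β : Type*} {ra : α → α → Prop} {rb : β → β → Prop}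
    {f : α → β} (hf : IsTukeyMap ra rb f) {T : Set β} (hT : TBounded rb T) :
    TBounded ra (f ⁻¹' T) :=
  not_not.mp fun h => hf _ h (hT.mono (Set.image_preimage_subset f T))

theorem Finset.finite_singleton_preimage_of_tBounded {α : Type*} {S : Set (Finset α)}
    (hS : TBounded (· ⊆ ·) S) : ((fun a : α => ({a} : Finset α)) ⁻¹' S).Finite :=
  let ⟨b, hb⟩ := hS
  b.finite_toSet.subset fun _ ha => Finset.singleton_subset_iff.mp (hb _ ha)

theorem Finset.isTukeyMap_map {α β : Type*} (f : α ↪ β) :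
    IsTukeyMap (· ⊆ ·) (· ⊆ ·) (Finset.map f) := by
  classical
  rintro S hS ⟨b, hb⟩
  refine hS ⟨b.preimage f f.injective.injOn, fun s hs a ha => ?_⟩
  exact Finset.mem_preimage.mpr (hb _ ⟨s, hs, rfl⟩ (Finset.mem_map_of_mem f ha))

theorem tukeyLE_finset_of_mk_le {α β : Type u} (h : #α ≤ #β) :
    TukeyLE ((· ⊆ ·) : Finset α → Finset α → Prop) ((· ⊆ ·) : Finset β → Finset β → Prop) :=
  let ⟨f⟩ := h
  ⟨Finset.map f, Finset.isTukeyMap_map f⟩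

theorem IsTukeyMap.mk_le_of_finset {α β : Type u} [Infinite β] {F : Finset α → Finset β}
    (hF : IsTukeyMap (· ⊆ ·) (· ⊆ ·) F) : #α ≤ #β := by
  have hfibre : ∀ c : Finset β, #((fun a : α => F {a}) ⁻¹' {c}) ≤ ℵ₀ := fun c =>
    (Finset.finite_singleton_preimage_of_tBounded
      (hF.tBounded_preimage ⟨c, fun _ hx => (Set.mem_singleton_iff.mp hx).le⟩)).lt_aleph0.le
  calc #α ≤ #(Finset β) * ℵ₀ := mk_le_mk_mul_of_mk_preimage_le _ hfibre
    _ = #β := by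
      rw [mk_finset_of_infinite, mul_eq_left (aleph0_le_mk β) (aleph0_le_mk β) aleph0_ne_zero]

theorem stmt5_general (A B : Type) [Infinite B] :
    TukeyLE ((· ⊆ ·) : Finset A → Finset A → Prop)
        ((· ⊆ ·) : Finset B → Finset B → Prop) ↔
      #A ≤ #B :=
  ⟨fun ⟨_, hF⟩ => hF.mk_le_of_finset, tukeyLE_finset_of_mk_le⟩

/-- For infinite sets `A, B`: `[A]^{<ω} ≤_T [B]^{<ω}` iff `|A| ≤ |B|`. -/
theorem stmt5 (A B : Type) [Infinite A] [Infinite B] :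
    TukeyLE ((· ⊆ ·) : Finset A → Finset A → Prop)
        ((· ⊆ ·) : Finset B → Finset B → Prop) ↔
      #A ≤ #B :=
  stmt5_general A B
end

section
/- No two of the five directed sets 1 (a one-element order), ω, ω₁, ω × ω₁, and ⟨[ω₁]^{<ω}, ⊆⟩ are Tukey equivalent. -/
/-!
A Tukey map sends a family all of whose large subfamilies are unbounded to a family with the
same property, so `P ≤_T Q` fails as soon as `P` carries such a family while every family in `Q`
has a large bounded subfamily. Three notions of largeness separate the five directed sets:
* infinite subsets of `ℕ`: `n ↦ n` in `ω` and `n ↦ (n, c)` in `ω × ω₁` are unbounded on them,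
  while every countable subset of `ω₁` is bounded;
* uncountable subsets of `ω₁`: `α ↦ α` in `ω₁` and `α ↦ (0, α)` in `ω × ω₁` are unbounded on
  them, while by pigeonhole every `ω₁`-family in `ω` is constant on an uncountable set;
* infinite subsets of `ω₁`: the singletons of `[ω₁]^{<ω}` are unbounded on them, while in `ω`,
  `ω₁` and `ω × ω₁` every `ω₁`-family has an infinite bounded subfamily (in `ω × ω₁`, take a
  countable infinite part of an uncountable fibre of the first coordinate).
-/

open Cardinal

noncomputable section

/-- The first uncountable ordinal `ω₁` as a linearly ordered type. -/
abbrev Omega1 : Type := (Cardinal.aleph 1).ord.ToType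

/-- The one-element directed set `1`. -/
def rOne : PUnit → PUnit → Prop := (· ≤ ·)

/-- `ω` with its usual order. -/
def rOmega : ℕ → ℕ → Prop := (· ≤ ·)

/-- `ω₁` with its usual order. -/
def rOmega1 : Omega1 → Omega1 → Prop := (· ≤ ·)

/-- `ω × ω₁` with the coordinatewise order. -/
def rProd : ℕ × Omega1 → ℕ × Omega1 → Prop := fun a b => a.1 ≤ b.1 ∧ a.2 ≤ b.2

/-- `[ω₁]^{<ω}` ordered by inclusion. -/
def rFin : Finset Omega1 → Finset Omega1 → Prop := (· ⊆ ·)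

universe u

section Invariants

variable {α β ι : Type*}

theorem tBounded_iff_bddAbove [Preorder α] {S : Set α} : TBounded (· ≤ ·) S ↔ BddAbove S :=
  Iff.rfl

def IsUnboundedFamily (r : α → α → Prop) (p : Set ι → Prop) (x : ι → α) : Prop :=
  ∀ A, p A → ¬ TBounded r (x '' A)

def HasBoundedSubfamilies (r : β → β → Prop) (ι : Type*) (p : Set ι → Prop) : Prop :=
  ∀ y : ι → β, ∃ A, p A ∧ TBounded r (y '' A)

theorem IsUnboundedFamily.not_tukeyLE {ra : α → α → Prop} {rb : β → β → Prop}
    {p : Set ι → Prop} {x : ι → α} (hx : IsUnboundedFamily ra p x)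
    (hb : HasBoundedSubfamilies rb ι p) : ¬ TukeyLE ra rb := by
  rintro ⟨f, hf⟩
  obtain ⟨A, hA, hbdd⟩ := hb (f ∘ x)
  exact hf _ (hx A hA) (Set.image_comp f x A ▸ hbdd)

theorem IsUnboundedFamily.of_comp {ra : α → α → Prop} {rb : β → β → Prop} {p : Set ι → Prop}
    {x : ι → α} {g : α → β} (hg : ∀ a b, ra a b → rb (g a) (g b))
    (h : IsUnboundedFamily rb p (g ∘ x)) : IsUnboundedFamily ra p x := by
  rintro A hA ⟨b, hb⟩
  refine h A hA ⟨g b, ?_⟩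
  rintro _ ⟨i, hi, rfl⟩
  exact hg _ _ (hb _ ⟨i, hi, rfl⟩)

theorem HasBoundedSubfamilies.mono {r : β → β → Prop} {p q : Set ι → Prop}
    (h : HasBoundedSubfamilies r ι p) (hpq : ∀ A, p A → q A) : HasBoundedSubfamilies r ι q :=
  fun y => (h y).imp fun _ => And.imp_left (hpq _)

theorem hasBoundedSubfamilies_of_forall_tBounded {r : β → β → Prop} {p : Set ι → Prop}
    (hr : ∀ S, TBounded r S) (hp : p .univ) : HasBoundedSubfamilies r ι p :=
  fun _ => ⟨.univ, hp, hr _⟩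

end Invariants

theorem hasBoundedSubfamilies_of_countable {ι β : Type u} [Uncountable ι] [Countable β]
    {r : β → β → Prop} (hr : ∀ b, r b b) : HasBoundedSubfamilies r ι (¬ ·.Countable) := by
  intro y
  obtain ⟨b, hb⟩ := Cardinal.exists_uncountable_fiber y
    (Cardinal.mk_le_aleph0.trans_lt (Cardinal.aleph0_lt_mk_iff.mpr ‹_›))
  refine ⟨y ⁻¹' {b}, not_countable_iff.mpr hb, b, ?_⟩
  rintro _ ⟨i, rfl, rfl⟩
  exact hr _

theorem bddAbove_of_countable_of_aleph0_lt_cof {α : Type*} [LinearOrder α]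
    (hα : ℵ₀ < Order.cof α) {S : Set α} (hS : S.Countable) : BddAbove S := by
  by_contra hunb
  have hcof : Order.cof α ≤ #S := Order.cof_le (IsCofinal.of_not_bddAbove hunb)
  exact (hcof.trans (Cardinal.le_aleph0_iff_set_countable.mpr hS)).not_gt hα

namespace Omega1

theorem mk_eq : #Omega1 = ℵ₁ :=
  Cardinal.mk_ord_toType _

instance : Uncountable Omega1 :=
  Cardinal.aleph0_lt_mk_iff.mp (mk_eq ▸ Cardinal.aleph0_lt_aleph_one)

theorem cof_eq : Order.cof Omega1 = ℵ₁ := by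
  rw [Ordinal.cof_toType, Cardinal.isRegular_aleph_one.cof_ord]

theorem bddAbove_of_countable {S : Set Omega1} (hS : S.Countable) : BddAbove S :=
  bddAbove_of_countable_of_aleph0_lt_cof (cof_eq ▸ Cardinal.aleph0_lt_aleph_one :) hS

theorem countable_Iic (b : Omega1) : (Set.Iic b).Countable := by
  have hIio : #(Set.Iio b) < ℵ₁ := by simpa [mk_eq] using Cardinal.mk_Iio_lt b (by simp)
  rw [← Set.Iio_insert]
  exact (Cardinal.le_aleph0_iff_set_countable.mp (Cardinal.lt_aleph_one_iff.mp hIio)).insert b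

theorem countable_of_bddAbove {S : Set Omega1} (hS : BddAbove S) : S.Countable :=
  let ⟨b, hb⟩ := hS
  (countable_Iic b).mono hb

theorem exists_infinite_subset_bddAbove_image {ι : Type*} (y : ι → Omega1) {I : Set ι}
    (hI : I.Infinite) : ∃ A ⊆ I, A.Infinite ∧ BddAbove (y '' A) :=
  let ⟨A, hAI, hAc, hAi⟩ := hI.exists_subset_countable_infinite
  ⟨A, hAI, hAi, bddAbove_of_countable (hAc.image y)⟩

end Omega1

theorem isUnboundedFamily_rOmega : IsUnboundedFamily rOmega Set.Infinite (id : ℕ → ℕ) :=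
  fun A hA hbdd => hA.not_bddAbove (Set.image_id A ▸ tBounded_iff_bddAbove.mp hbdd)

theorem isUnboundedFamily_rOmega1 :
    IsUnboundedFamily rOmega1 (¬ ·.Countable) (id : Omega1 → Omega1) :=
  fun A hA hbdd =>
    hA (Set.image_id A ▸ Omega1.countable_of_bddAbove (tBounded_iff_bddAbove.mp hbdd))

theorem isUnboundedFamily_rProd_fst (c : Omega1) :
    IsUnboundedFamily rProd Set.Infinite (fun n : ℕ => (n, c)) :=
  isUnboundedFamily_rOmega.of_comp (g := Prod.fst) fun _ _ h => h.1

theorem isUnboundedFamily_rProd_snd :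
    IsUnboundedFamily rProd (¬ ·.Countable) (fun b : Omega1 => ((0 : ℕ), b)) :=
  isUnboundedFamily_rOmega1.of_comp (g := Prod.snd) fun _ _ h => h.2

theorem isUnboundedFamily_rFin_singleton :
    IsUnboundedFamily rFin Set.Infinite (fun a : Omega1 => ({a} : Finset Omega1)) := by
  rintro A hA ⟨F, hF⟩
  exact hA (F.finite_toSet.subset fun a ha => Finset.singleton_subset_iff.mp (hF _ ⟨a, ha, rfl⟩))

theorem hasBoundedSubfamilies_rOne {ι : Type*} {p : Set ι → Prop} (hp : p .univ) :
    HasBoundedSubfamilies rOne ι p :=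
  hasBoundedSubfamilies_of_forall_tBounded (fun _ => ⟨PUnit.unit, fun _ _ => le_rfl⟩) hp

theorem hasBoundedSubfamilies_rOmega : HasBoundedSubfamilies rOmega Omega1 (¬ ·.Countable) :=
  hasBoundedSubfamilies_of_countable le_refl

theorem hasBoundedSubfamilies_rOmega1 {ι : Type*} [Infinite ι] :
    HasBoundedSubfamilies rOmega1 ι Set.Infinite := fun y =>
  let ⟨A, _, hA, hbdd⟩ := Omega1.exists_infinite_subset_bddAbove_image y Set.infinite_univ
  ⟨A, hA, hbdd⟩

theorem hasBoundedSubfamilies_rProd : HasBoundedSubfamilies rProd Omega1 Set.Infinite := by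
  intro y
  obtain ⟨A, hA, n, hn⟩ := hasBoundedSubfamilies_rOmega (Prod.fst ∘ y)
  obtain ⟨B, hBA, hB, c, hc⟩ :=
    Omega1.exists_infinite_subset_bddAbove_image (Prod.snd ∘ y) (mt Set.Finite.countable hA)
  refine ⟨B, hB, (n, c), ?_⟩
  rintro _ ⟨i, hi, rfl⟩
  exact ⟨hn _ ⟨i, hBA hi, rfl⟩, hc ⟨i, hi, rfl⟩⟩

/-- Isbell: no two of `1`, `ω`, `ω₁`, `ω × ω₁`, `[ω₁]^{<ω}` are Tukey equivalent. -/
theorem stmt7 :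
    ¬ TukeyEquiv rOne rOmega ∧ ¬ TukeyEquiv rOne rOmega1 ∧
    ¬ TukeyEquiv rOne rProd ∧ ¬ TukeyEquiv rOne rFin ∧
    ¬ TukeyEquiv rOmega rOmega1 ∧ ¬ TukeyEquiv rOmega rProd ∧
    ¬ TukeyEquiv rOmega rFin ∧ ¬ TukeyEquiv rOmega1 rProd ∧
    ¬ TukeyEquiv rOmega1 rFin ∧ ¬ TukeyEquiv rProd rFin := by
  have hOmega_infinite : HasBoundedSubfamilies rOmega Omega1 Set.Infinite :=
    hasBoundedSubfamilies_rOmega.mono fun _ => mt Set.Finite.countable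
  refine ⟨fun h => ?_, fun h => ?_, fun h => ?_, fun h => ?_, fun h => ?_,
    fun h => ?_, fun h => ?_, fun h => ?_, fun h => ?_, fun h => ?_⟩
  · exact isUnboundedFamily_rOmega.not_tukeyLE
      (hasBoundedSubfamilies_rOne Set.infinite_univ) h.2
  · exact isUnboundedFamily_rOmega1.not_tukeyLE
      (hasBoundedSubfamilies_rOne Set.not_countable_univ) h.2
  · exact isUnboundedFamily_rProd_snd.not_tukeyLE
      (hasBoundedSubfamilies_rOne Set.not_countable_univ) h.2
  · exact isUnboundedFamily_rFin_singleton.not_tukeyLE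
      (hasBoundedSubfamilies_rOne Set.infinite_univ) h.2
  · exact isUnboundedFamily_rOmega.not_tukeyLE hasBoundedSubfamilies_rOmega1 h.1
  · exact isUnboundedFamily_rProd_snd.not_tukeyLE hasBoundedSubfamilies_rOmega h.2
  · exact isUnboundedFamily_rFin_singleton.not_tukeyLE hOmega_infinite h.2
  · exact (isUnboundedFamily_rProd_fst (Classical.arbitrary _)).not_tukeyLE
      hasBoundedSubfamilies_rOmega1 h.2
  · exact isUnboundedFamily_rFin_singleton.not_tukeyLE hasBoundedSubfamilies_rOmega1 h.2
  · exact isUnboundedFamily_rFin_singleton.not_tukeyLE hasBoundedSubfamilies_rProd h.2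

end
end

section
/- Suppose X and Y are topological spaces, p ∈ X, q ∈ Y, A is a local base at p in X, B is a local base at q in Y, f : X → Y is continuous and open, and f(p) = q. Then ⟨B, ⊇⟩ ≤_T ⟨A, ⊇⟩. -/
/-! By continuity, each `V ∈ B` contains `f '' U` for some `U ∈ A`; choosing such a `U` is the
Tukey map. If these `U` all contain a common `U₀ ∈ A`, then by openness `f '' U₀` is a
neighbourhood of `q`, so it contains some `W ∈ B`, and `W` lies inside every such `V`. -/

open Cardinal

/-- `A` is a local base at `p`: a family of open neighborhoods of `p` such that every
open set containing `p` contains a member of `A`. -/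
def IsLocalBase {X : Type*} [TopologicalSpace X] (p : X) (A : Set (Set X)) : Prop :=
  (∀ U ∈ A, IsOpen U ∧ p ∈ U) ∧ ∀ V : Set X, IsOpen V → p ∈ V → ∃ U ∈ A, U ⊆ V

theorem isTukeyMap_of_forall_exists {α β : Type*} {ra : α → α → Prop} {rb : β → β → Prop}
    {g : α → β} (h : ∀ b, ∃ a, ∀ x, rb (g x) b → ra x a) : IsTukeyMap ra rb g := by
  rintro S hS ⟨b, hb⟩
  obtain ⟨a, ha⟩ := h b
  exact hS ⟨a, fun x hx => ha x (hb (g x) ⟨x, hx, rfl⟩)⟩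

namespace IsLocalBase

open Topology

variable {X : Type*} [TopologicalSpace X] {p : X} {A : Set (Set X)}

theorem mem_nhds (hA : IsLocalBase p A) {U : Set X} (hU : U ∈ A) : U ∈ 𝓝 p :=
  (hA.1 U hU).1.mem_nhds (hA.1 U hU).2

theorem exists_subset_of_mem_nhds (hA : IsLocalBase p A) {V : Set X} (hV : V ∈ 𝓝 p) :
    ∃ U ∈ A, U ⊆ V := by
  obtain ⟨W, hWV, hWo, hpW⟩ := mem_nhds_iff.1 hV
  obtain ⟨U, hUA, hUW⟩ := hA.2 W hWo hpW
  exact ⟨U, hUA, hUW.trans hWV⟩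

end IsLocalBase

/-- If `f : X → Y` is continuous and open with `f p = q`, then for local bases `A` at `p`
and `B` at `q`, we have `⟨B, ⊇⟩ ≤_T ⟨A, ⊇⟩`. -/
theorem stmt8 {X Y : Type*} [TopologicalSpace X] [TopologicalSpace Y]
    (p : X) (q : Y) (A : Set (Set X)) (B : Set (Set Y))
    (hA : IsLocalBase p A) (hB : IsLocalBase q B)
    (f : X → Y) (hc : Continuous f) (ho : IsOpenMap f) (hpq : f p = q) :
    TukeyLE (fun U V : B => (V : Set Y) ⊆ (U : Set Y))
      (fun U V : A => (V : Set X) ⊆ (U : Set X)) := by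
  choose g hg using fun V : B =>
    hA.exists_subset_of_mem_nhds (hc.continuousAt.preimage_mem_nhds (hpq ▸ hB.mem_nhds V.2))
  refine ⟨fun V => ⟨g V, (hg V).1⟩, isTukeyMap_of_forall_exists fun U => ?_⟩
  obtain ⟨W, hWB, hW⟩ := hB.exists_subset_of_mem_nhds (hpq ▸ ho.image_mem_nhds (hA.mem_nhds U.2))
  refine ⟨⟨W, hWB⟩, fun V hUV => ?_⟩
  calc W ⊆ f '' U := hW
    _ ⊆ f '' g V := Set.image_mono hUV
    _ ⊆ f '' (f ⁻¹' V) := Set.image_mono (hg V).2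
    _ ⊆ V := Set.image_preimage_subset f V
end

section
/- There exists a nonprincipal ultrafilter U on ω such that ⟨U, ⊇*⟩ is Tukey equivalent to ⟨[𝔠]^{<ω}, ⊆⟩. -/
open Cardinal

/-- `U` is a nonprincipal ultrafilter. -/
def Nonprincipal (U : Ultrafilter ℕ) : Prop := ∀ a : ℕ, U ≠ pure a

/-- `⟨U, ⊇⟩`: the members of `U` ordered by reverse inclusion (`A ≤ B` iff `A ⊇ B`). -/
def revIncl (U : Ultrafilter ℕ) : {A : Set ℕ // A ∈ U} → {A : Set ℕ // A ∈ U} → Prop :=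
  fun A B => (B : Set ℕ) ⊆ (A : Set ℕ)

/-- `⟨U, ⊇*⟩`: the members of `U` preordered by reverse almost inclusion
(`A ≤ B` iff `A ⊇* B` iff `B \\ A` is finite). -/
def revAlmostIncl (U : Ultrafilter ℕ) : {A : Set ℕ // A ∈ U} → {A : Set ℕ // A ∈ U} → Prop :=
  fun A B => ((B : Set ℕ) \ (A : Set ℕ)).Finite

namespace Isbell

open Filter Set

noncomputable def enc : Finset ℕ × Finset (Finset ℕ) ≃ ℕ := Denumerable.eqv _

/-- The independent family indexed by subsets of ℕ. -/
def Afam (X : Set ℕ) : Set ℕ :=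
  {n | ∃ t ∈ (enc.symm n).2, (t : Set ℕ) = ↑(enc.symm n).1 ∩ X}

lemma indep (F G : Finset (Set ℕ)) (hFG : ∀ X ∈ F, ∀ Y ∈ G, X ≠ Y) :
    ((⋂ X ∈ F, Afam X) \ ⋃ Y ∈ G, Afam Y).Infinite := by
  classical
  have hsep : ∀ X ∈ F, ∀ Y ∈ G, ∃ q, ¬ (q ∈ X ↔ q ∈ Y) := by
    intro X hX Y hY
    by_contra h
    push_neg at h
    exact hFG X hX Y hY (Set.ext h)
  set p : Set ℕ → Set ℕ → ℕ := fun X Y =>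
    if h : ∃ q, ¬ (q ∈ X ↔ q ∈ Y) then h.choose else 0 with hp
  have hpspec : ∀ X ∈ F, ∀ Y ∈ G, ¬ (p X Y ∈ X ↔ p X Y ∈ Y) := by
    intro X hX Y hY
    have h := hsep X hX Y hY
    simp only [hp, dif_pos h]
    exact h.choose_spec
  set s₀ : Finset ℕ := F.biUnion (fun X => G.image (fun Y => p X Y)) with hs₀
  set N : ℕ := s₀.sup id with hN
  set s : ℕ → Finset ℕ := fun k => insert (N + 1 + k) s₀ with hs
  set 𝒜 : ℕ → Finset (Finset ℕ) := fun k => F.image (fun X => (s k).filter (· ∈ X)) with h𝒜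
  have hs₀sub : ∀ k, s₀ ⊆ s k := fun k => Finset.subset_insert _ _
  have hps : ∀ k, ∀ X ∈ F, ∀ Y ∈ G, p X Y ∈ s k := by
    intro k X hX Y hY
    exact hs₀sub k (Finset.mem_biUnion.mpr ⟨X, hX, Finset.mem_image.mpr ⟨Y, hY, rfl⟩⟩)
  apply Set.infinite_of_injective_forall_mem
    (f := fun k => enc (s k, 𝒜 k))
  case hi =>
    intro k k' h
    have h2 : (s k, 𝒜 k) = (s k', 𝒜 k') := enc.injective h
    have h3 : s k = s k' := congrArg Prod.fst h2
    have hk : N + 1 + k ∈ s k' := h3 ▸ Finset.mem_insert_self _ _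
    rcases Finset.mem_insert.mp hk with h4 | h4
    · omega
    · have h5 : N + 1 + k ≤ N := Finset.le_sup (f := id) h4
      omega
  case hf =>
    intro k
    constructor
    · -- in every Afam X for X ∈ F
      refine Set.mem_iInter₂.mpr fun X hX => ?_
      refine ⟨(s k).filter (· ∈ X), ?_, ?_⟩
      · simp only [Equiv.symm_apply_apply]
        exact Finset.mem_image.mpr ⟨X, hX, rfl⟩
      · simp only [Equiv.symm_apply_apply]
        rw [Finset.coe_filter]
        exact Set.sep_mem_eq
    · -- not in any Afam Y for Y ∈ G
      intro hmem
      rcases Set.mem_iUnion₂.mp hmem with ⟨Y, hY, t, ht, hteq⟩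
      simp only [Equiv.symm_apply_apply] at ht hteq
      rcases Finset.mem_image.mp ht with ⟨X, hX, rfl⟩
      have hteq' : ∀ q : ℕ, q ∈ s k → (q ∈ X ↔ q ∈ Y) := by
        intro q hq
        have h7 := Set.ext_iff.mp hteq q
        simpa [Finset.mem_coe, Finset.mem_filter, hq] using h7
      exact hpspec X hX Y hY (hteq' _ (hps k X hX Y hY))

/-- Generating family: the independent sets, plus complements of sets almost contained
in infinitely many members of the family. -/
def gen : Set (Set ℕ) :=
  Set.range Afam ∪ {S | {X : Set ℕ | (Sᶜ \ Afam X).Finite}.Infinite}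

lemma exists_injOn (E : Finset (Set ℕ)) (T : Set ℕ → Set (Set ℕ))
    (hT : ∀ B ∈ E, (T B).Infinite) (Fb : Finset (Set ℕ)) :
    ∃ Y : Set ℕ → Set ℕ, Set.InjOn Y ↑E ∧ ∀ B ∈ E, Y B ∈ T B ∧ Y B ∉ Fb := by
  classical
  induction E using Finset.induction_on with
  | empty => exact ⟨fun _ => ∅, by simp, by simp⟩
  | @insert a E ha ih =>
      obtain ⟨Y, hinj, hY⟩ := ih (fun B hB => hT B (Finset.mem_insert_of_mem hB))
      have hfin : (↑Fb ∪ Y '' ↑E : Set (Set ℕ)).Finite :=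
        Fb.finite_toSet.union (E.finite_toSet.image Y)
      obtain ⟨y, hyT, hyn⟩ := ((hT a (Finset.mem_insert_self a E)).diff hfin).nonempty
      have hane : ∀ B, B ∈ E → B ≠ a := fun B hB h => ha (h ▸ hB)
      have hupd : ∀ B, B ∈ E → Function.update Y a y B = Y B :=
        fun B hB => Function.update_of_ne (hane B hB) _ _
      refine ⟨Function.update Y a y, ?_, ?_⟩
      · rw [Finset.coe_insert]
        refine (Set.injOn_insert (fun h => ha (Finset.mem_coe.mp h))).mpr ⟨?_, ?_⟩
        · refine hinj.congr fun B hB => (hupd B (Finset.mem_coe.mp hB)).symm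
        · rw [Function.update_self]
          intro hmem
          obtain ⟨B, hB, hBy⟩ := hmem
          rw [hupd B (Finset.mem_coe.mp hB)] at hBy
          exact hyn (Or.inr ⟨B, hB, hBy⟩)
      · intro B hB
        rcases Finset.mem_insert.mp hB with rfl | hB
        · rw [Function.update_self]
          exact ⟨hyT, fun h => hyn (Or.inl h)⟩
        · rw [hupd B hB]
          exact hY B hB
lemma fip (F E : Finset (Set ℕ))
    (hE : ∀ B ∈ E, {X : Set ℕ | (B \ Afam X).Finite}.Infinite) :
    ((⋂ X ∈ F, Afam X) ∩ ⋂ B ∈ E, Bᶜ).Nonempty := by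
  classical
  obtain ⟨Y, hinj, hY⟩ := exists_injOn E _ hE F
  set G : Finset (Set ℕ) := E.image Y with hG
  have hFG : ∀ X ∈ F, ∀ Z ∈ G, X ≠ Z := by
    intro X hX Z hZ h
    obtain ⟨B, hB, rfl⟩ := Finset.mem_image.mp hZ
    exact (hY B hB).2 (h ▸ hX)
  have hI := indep F G hFG
  have hD : (⋃ B ∈ E, (B \ Afam (Y B))).Finite :=
    Set.Finite.biUnion E.finite_toSet (fun B hB => (hY B hB).1)
  obtain ⟨n, hn1, hn2⟩ := (hI.diff hD).nonempty
  refine ⟨n, hn1.1, ?_⟩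
  refine Set.mem_iInter₂.mpr fun B hB => ?_
  intro hnB
  have hnA : n ∈ Afam (Y B) := by
    by_contra hna
    exact hn2 (Set.mem_iUnion₂.mpr ⟨B, hB, hnB, hna⟩)
  exact hn1.2 (Set.mem_iUnion₂.mpr ⟨Y B, Finset.mem_image_of_mem Y hB, hnA⟩)

lemma gen_neBot : (Filter.generate gen).NeBot := by
  classical
  rw [Filter.generate_neBot_iff]
  intro t hts htf
  set tf : Finset (Set ℕ) := htf.toFinset with htfdef
  set F : Finset (Set ℕ) := tf.image (fun s =>
    if h : ∃ X, Afam X = s then h.choose else ∅) with hF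
  set E : Finset (Set ℕ) := (tf.filter (fun s => s ∉ Set.range Afam)).image compl with hEdef
  have hE : ∀ B ∈ E, {X : Set ℕ | (B \ Afam X).Finite}.Infinite := by
    intro B hB
    obtain ⟨u, hu, rfl⟩ := Finset.mem_image.mp hB
    have hu' := Finset.mem_filter.mp hu
    have hugen : u ∈ gen := hts (htf.mem_toFinset.mp hu'.1)
    rcases hugen with h | h
    · exact absurd h hu'.2
    · simpa using h
  obtain ⟨n, hn1, hn2⟩ := fip F E hE
  refine ⟨n, ?_⟩
  rw [Set.mem_sInter]
  intro u hu
  have hut : u ∈ tf := htf.mem_toFinset.mpr hu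
  by_cases hr : u ∈ Set.range Afam
  · obtain ⟨X, hX⟩ := hr
    have hXF : (if h : ∃ X, Afam X = u then h.choose else (∅ : Set ℕ)) ∈ F :=
      Finset.mem_image_of_mem _ hut
    have hex : ∃ X, Afam X = u := ⟨X, hX⟩
    have hch : Afam (if h : ∃ X, Afam X = u then h.choose else ∅) = u := by
      rw [dif_pos hex]
      exact hex.choose_spec
    have := Set.mem_iInter₂.mp hn1 _ hXF
    rwa [hch] at this
  · have huE : uᶜ ∈ E :=
      Finset.mem_image_of_mem _ (Finset.mem_filter.mpr ⟨hut, hr⟩)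
    have := Set.mem_iInter₂.mp hn2 _ huE
    simpa using this

/-- The Isbell ultrafilter. -/
noncomputable def UF : Ultrafilter ℕ := @Ultrafilter.of _ (Filter.generate gen) gen_neBot

lemma le_UF : ↑UF ≤ Filter.generate gen := @Ultrafilter.of_le _ (Filter.generate gen) gen_neBot

lemma Afam_mem (X : Set ℕ) : Afam X ∈ UF :=
  le_UF (Filter.mem_generate_of_mem (Or.inl ⟨X, rfl⟩))

lemma compl_mem (B : Set ℕ) (h : {X : Set ℕ | (B \ Afam X).Finite}.Infinite) : Bᶜ ∈ UF := by
  refine le_UF (Filter.mem_generate_of_mem (Or.inr ?_))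
  simpa using h

lemma infinite_SetNat : Infinite (Set ℕ) :=
  Infinite.of_injective (fun n : ℕ => ({n} : Set ℕ)) (fun a b h => by
    simpa using Set.ext_iff.mp h a)

lemma compl_mem_of_finite (B : Set ℕ) (h : B.Finite) : Bᶜ ∈ UF := by
  refine compl_mem B ?_
  have : {X : Set ℕ | (B \ Afam X).Finite} = Set.univ :=
    Set.eq_univ_of_forall fun X => h.subset Set.diff_subset
  rw [this]
  exact @Set.infinite_univ _ infinite_SetNat

lemma key (B : Set ℕ) (hB : B ∈ UF) : {X : Set ℕ | (B \ Afam X).Finite}.Finite := by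
  by_contra h
  have hc := compl_mem B h
  have : (∅ : Set ℕ) ∈ UF := by
    have := Filter.inter_mem hB hc
    rwa [Set.inter_compl_self] at this
  exact Filter.empty_notMem (↑UF : Filter ℕ) this

lemma UF_nonprincipal : Nonprincipal UF := by
  intro a h
  have h1 : ({a} : Set ℕ)ᶜ ∈ UF := compl_mem_of_finite _ (Set.finite_singleton a)
  rw [h] at h1
  simp [Ultrafilter.mem_pure] at h1

end Isbell


/-- Isbell: there is a nonprincipal ultrafilter `U` on `ω` with
`⟨U, ⊇*⟩ ≡_T ⟨[𝔠]^{<ω}, ⊆⟩`. -/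

theorem stmt11 :
    ∃ U : Ultrafilter ℕ, Nonprincipal U ∧
      ∀ C : Type, #C = Cardinal.continuum →
        TukeyEquiv (revAlmostIncl U) ((· ⊆ ·) : Finset C → Finset C → Prop) := by
  classical
  refine ⟨Isbell.UF, Isbell.UF_nonprincipal, ?_⟩
  intro C hC
  have hcard : #(Set ℕ) = #C := by
    rw [hC, Cardinal.mk_set, Cardinal.mk_nat, Cardinal.two_power_aleph0]
  obtain ⟨e⟩ := Cardinal.eq.mp hcard
  constructor
  · -- `⟨U, ⊇*⟩ ≤_T [𝔠]^{<ω}` via singletons of an injection into `C`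
    have hle : #{A : Set ℕ // A ∈ Isbell.UF} ≤ #C :=
      hcard ▸ Cardinal.mk_subtype_le _
    obtain ⟨ι⟩ := (Cardinal.le_def _ _).mp hle
    refine ⟨fun A => {ι A}, ?_⟩
    intro S hSub hbd
    have hSinf : S.Infinite := by
      intro hSfin
      apply hSub
      refine ⟨⟨⋂ x ∈ hSfin.toFinset, (x : Set ℕ), ?_⟩, ?_⟩
      · exact (Filter.biInter_mem hSfin.toFinset.finite_toSet).mpr fun x _ => x.2
      · intro x hx
        have hsub2 : (⋂ y ∈ hSfin.toFinset, (y : Set ℕ)) ⊆ (x : Set ℕ) :=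
          Set.biInter_subset_of_mem (hSfin.mem_toFinset.mpr hx)
        have hdiff : (⋂ y ∈ hSfin.toFinset, (y : Set ℕ)) \ (x : Set ℕ) = ∅ :=
          Set.diff_eq_empty.mpr hsub2
        show ((⋂ y ∈ hSfin.toFinset, (y : Set ℕ)) \ (x : Set ℕ)).Finite
        rw [hdiff]
        exact Set.finite_empty
    obtain ⟨b, hb⟩ := hbd
    have himg : ι '' S ⊆ ↑b := by
      rintro _ ⟨x, hx, rfl⟩
      exact Finset.singleton_subset_iff.mp (hb _ (Set.mem_image_of_mem _ hx))
    exact (hSinf.image (ι.injective.injOn)) (b.finite_toSet.subset himg)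
  · -- `[𝔠]^{<ω} ≤_T ⟨U, ⊇*⟩` via finite intersections of the independent family
    refine ⟨fun F => ⟨⋂ c ∈ F, Isbell.Afam (e.symm c),
      (Filter.biInter_mem F.finite_toSet).mpr fun c _ => Isbell.Afam_mem _⟩, ?_⟩
    intro S hSub hbd
    apply hSub
    obtain ⟨b, hb⟩ := hbd
    have hbU : {X : Set ℕ | ((b : Set ℕ) \ Isbell.Afam X).Finite}.Finite :=
      Isbell.key _ b.2
    have hUn : {c : C | ∃ F ∈ S, c ∈ F}.Finite := by
      by_contra hinf
      have hsubset : (fun c => e.symm c) '' {c : C | ∃ F ∈ S, c ∈ F} ⊆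
          {X : Set ℕ | ((b : Set ℕ) \ Isbell.Afam X).Finite} := by
        rintro _ ⟨c, ⟨F, hF, hcF⟩, rfl⟩
        have h1 : ((b : Set ℕ) \ ⋂ c ∈ F, Isbell.Afam (e.symm c)).Finite :=
          hb _ (Set.mem_image_of_mem _ hF)
        exact h1.subset (Set.diff_subset_diff_right (Set.biInter_subset_of_mem hcF))
      exact (Set.Infinite.image (e.symm.injective.injOn) hinf) (hbU.subset hsubset)
    refine ⟨hUn.toFinset, ?_⟩
    intro F hF c hc
    exact hUn.mem_toFinset.mpr ⟨F, hF, hc⟩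
end

section
/- If U is a nonprincipal ultrafilter on ω that is 𝔠-OK and is not a P-point, then ⟨U, ⊇*⟩ is Tukey equivalent to ⟨[𝔠]^{<ω}, ⊆⟩. -/
open Cardinal

/-- `U` is a P-point: every countable subset of `U` has a pseudointersection in `U`,
i.e. a member of `U` almost contained in every set of the subset. -/
def IsPPoint (U : Ultrafilter ℕ) : Prop :=
  ∀ S : Set (Set ℕ), S.Countable → (∀ A ∈ S, A ∈ U) →
    ∃ B ∈ U, ∀ A ∈ S, (B \ A).Finite

/-- `U` is `𝔠`-OK: for every sequence `⟨A_n⟩_{n<ω}` of members of `U` there is a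
`𝔠`-indexed family `⟨B_α⟩` of members of `U` with `⋂_{α ∈ σ} B_α ⊆* A_{|σ|}` for
every nonempty finite `σ`. -/
def IsContinuumOK (U : Ultrafilter ℕ) : Prop :=
  ∀ A : ℕ → Set ℕ, (∀ n, A n ∈ U) →
    ∃ B : Cardinal.continuum.{0}.ord.ToType → Set ℕ, (∀ α, B α ∈ U) ∧
      ∀ σ : Finset Cardinal.continuum.{0}.ord.ToType, σ.Nonempty →
        ((⋂ α ∈ σ, B α) \ A σ.card).Finite

/-!
`⟨U, ⊇*⟩` has size `𝔠` and its finite subsets are bounded, so sending `A` to `{A}` along an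
injection into `𝔠` is a Tukey map into `[𝔠]^{<ω}`.

Conversely, a non-P-point has a decreasing sequence `A_n` in `U` with no pseudointersection in
`U`, and `𝔠`-OK-ness gives `B_α ∈ U` with `⋂_{α ∈ σ} B_α ⊆* A_{|σ|}`. A set `D ∈ U` almost
contained in infinitely many `B_α` is then almost contained in every `A_n`, which is impossible.
Hence `σ ↦ ⋂_{α ∈ σ} B_α` maps every family of finite sets with infinite union, i.e. every
unbounded subset of `[𝔠]^{<ω}`, to an unbounded subset of `⟨U, ⊇*⟩`.
-/

theorem tukeyLE_finset_of_injective {α β : Type*} {r : α → α → Prop}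
    (hr : ∀ S : Set α, S.Finite → TBounded r S) {g : α → β} (hg : Function.Injective g) :
    TukeyLE r ((· ⊆ ·) : Finset β → Finset β → Prop) := by
  refine ⟨fun a => {g a}, fun S hS ⟨b, hb⟩ => hS (hr S ?_)⟩
  exact (b.finite_toSet.preimage hg.injOn).subset fun a ha => by simpa using hb _ ⟨a, ha, rfl⟩

theorem finite_diff_of_forall_finite_diff_of_infinite {ι : Type*} {A : ℕ → Set ℕ}
    (hA : Antitone A) {B : ι → Set ℕ}
    (hB : ∀ σ : Finset ι, σ.Nonempty → ((⋂ i ∈ σ, B i) \ A σ.card).Finite)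
    {W : Set ι} (hW : W.Infinite) {D : Set ℕ} (hD : ∀ i ∈ W, (D \ B i).Finite) (n : ℕ) :
    (D \ A n).Finite := by
  obtain ⟨τ, hτW, hτ⟩ := hW.exists_subset_card_eq (n + 1)
  have hτB : ((⋂ i ∈ τ, B i) \ A (n + 1)).Finite := hτ ▸ hB τ (Finset.card_pos.1 (by omega))
  have hDτ : (D \ ⋂ i ∈ τ, B i).Finite :=
    (τ.finite_toSet.biUnion fun i hi => hD i (hτW hi)).subset fun x hx => by
      simp only [Set.mem_sdiff, Set.mem_iInter, not_forall] at hx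
      obtain ⟨hxD, i, hi, hxi⟩ := hx
      exact Set.mem_biUnion hi ⟨hxD, hxi⟩
  refine (hDτ.union hτB).subset fun x ⟨hxD, hxA⟩ => ?_
  by_cases hx : x ∈ ⋂ i ∈ τ, B i
  · exact Or.inr ⟨hx, fun h => hxA (hA n.le_succ h)⟩
  · exact Or.inl ⟨hxD, hx⟩

section

variable {U : Ultrafilter ℕ}

theorem revAlmostIncl_bounded_of_finite {S : Set {A : Set ℕ // A ∈ U}} (hS : S.Finite) :
    TBounded (revAlmostIncl U) S :=
  ⟨⟨⋂ A ∈ S, (A : Set ℕ), (Filter.biInter_mem hS).2 fun A _ => A.2⟩, fun A hA => by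
    simp [revAlmostIncl, Set.sdiff_eq_empty.2 (Set.biInter_subset_of_mem hA)]⟩

theorem mk_ultrafilter_le_continuum : #{A : Set ℕ // A ∈ U} ≤ 𝔠 :=
  (mk_subtype_le _).trans mk_set_nat.le

theorem exists_antitone_of_not_isPPoint (hnp : ¬ IsPPoint U) :
    ∃ A : ℕ → Set ℕ, (∀ n, A n ∈ U) ∧ Antitone A ∧ ∀ D ∈ U, ∃ n, (D \ A n).Infinite := by
  simp only [IsPPoint, not_forall, not_exists, not_and, exists_prop] at hnp
  obtain ⟨S, hS, hSU, hnoPseudo⟩ := hnp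
  have hSne : S.Nonempty := by
    by_contra hS0
    obtain ⟨X, hX, -⟩ := hnoPseudo Set.univ Filter.univ_mem
    exact hS0 ⟨X, hX⟩
  obtain ⟨e, rfl⟩ := hS.exists_eq_range hSne
  refine ⟨fun n => ⋂ k ∈ Set.Iic n, e k,
    fun n => (Filter.biInter_mem (Set.finite_Iic n)).2 fun k _ => hSU _ ⟨k, rfl⟩,
    fun m n hmn => Set.biInter_mono (Set.Iic_subset_Iic.2 hmn) fun _ _ => subset_rfl,
    fun D hD => ?_⟩
  obtain ⟨_, ⟨k, rfl⟩, hk⟩ := hnoPseudo D hD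
  exact ⟨k, Set.Infinite.mono
    (Set.sdiff_subset_sdiff_right (Set.biInter_subset_of_mem Set.self_mem_Iic)) hk⟩

theorem tukeyLE_finset_revAlmostIncl {ι : Type*} {B : ι → Set ℕ} (hBU : ∀ i, B i ∈ U)
    (hB : ∀ W : Set ι, W.Infinite → ∀ D ∈ U, ∃ i ∈ W, (D \ B i).Infinite) :
    TukeyLE ((· ⊆ ·) : Finset ι → Finset ι → Prop) (revAlmostIncl U) := by
  refine ⟨fun σ => ⟨⋂ i ∈ σ, B i, (Filter.biInter_mem σ.finite_toSet).2 fun i _ => hBU i⟩, ?_⟩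
  rintro T hT ⟨⟨D, hD⟩, hDT⟩
  have hW : (⋃ σ ∈ T, (σ : Set ι)).Infinite := fun hfin =>
    hT ⟨hfin.toFinset, fun σ hσ i hi => hfin.mem_toFinset.2 (Set.mem_biUnion hσ hi)⟩
  obtain ⟨i, hi, hDi⟩ := hB _ hW D hD
  obtain ⟨σ, hσ, hiσ⟩ := Set.mem_iUnion₂.1 hi
  exact hDi ((hDT _ ⟨σ, hσ, rfl⟩).subset
    (Set.sdiff_subset_sdiff_right (Set.biInter_subset_of_mem hiσ)))

theorem exists_family_not_almost_contained (hok : IsContinuumOK U) (hnp : ¬ IsPPoint U)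
    {C : Type} (hC : #C = 𝔠) :
    ∃ B : C → Set ℕ, (∀ i, B i ∈ U) ∧
      ∀ W : Set C, W.Infinite → ∀ D ∈ U, ∃ i ∈ W, (D \ B i).Infinite := by
  obtain ⟨A, hAU, hA, hAD⟩ := exists_antitone_of_not_isPPoint hnp
  obtain ⟨B, hBU, hB⟩ := hok A hAU
  obtain ⟨e⟩ := Cardinal.eq.1 (hC.trans (mk_ord_toType _).symm)
  refine ⟨B ∘ e, fun i => hBU _, fun W hW D hD => ?_⟩
  by_contra! hWD
  obtain ⟨n, hn⟩ := hAD D hD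
  exact hn (finite_diff_of_forall_finite_diff_of_infinite hA hB (hW.image e.injective.injOn)
    (by rintro _ ⟨i, hi, rfl⟩; exact hWD i hi) n)

end

theorem stmt12_general (U : Ultrafilter ℕ)
    (hok : IsContinuumOK U) (hnp : ¬ IsPPoint U) :
    ∀ C : Type, #C = Cardinal.continuum →
      TukeyEquiv (revAlmostIncl U) ((· ⊆ ·) : Finset C → Finset C → Prop) := by
  intro C hC
  obtain ⟨g⟩ := (Cardinal.le_def _ _).1 (hC ▸ mk_ultrafilter_le_continuum (U := U))
  obtain ⟨B, hBU, hB⟩ := exists_family_not_almost_contained hok hnp hC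
  exact ⟨tukeyLE_finset_of_injective (fun _ => revAlmostIncl_bounded_of_finite) g.injective,
    tukeyLE_finset_revAlmostIncl hBU hB⟩

/-- A `𝔠`-OK non-P-point satisfies `⟨U, ⊇*⟩ ≡_T ⟨[𝔠]^{<ω}, ⊆⟩`. -/
theorem stmt12 (U : Ultrafilter ℕ) (hU : Nonprincipal U)
    (hok : IsContinuumOK U) (hnp : ¬ IsPPoint U) :
    ∀ C : Type, #C = Cardinal.continuum →
      TukeyEquiv (revAlmostIncl U) ((· ⊆ ·) : Finset C → Finset C → Prop) :=
  stmt12_general U hok hnp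
end

section
/- Suppose U is a nonprincipal ultrafilter on ω that is not a P-point. Then there exists a nonprincipal ultrafilter V on ω such that ⟨V, ⊇⟩ ≤_T ⟨U, ⊇*⟩. -/
open Cardinal

/-!
Since `U` is not a P-point, there are sets `e 0, e 1, …` in `U` with no pseudointersection in `U`.
Let `g x` be one more than the first index `n` with `x ∉ e n` (`0` if there is none) and let
`V = g(U)`. The fibre over `0` is a pseudointersection and the fibre over `m + 1`
misses `e m`, so `V` is nonprincipal. Every `B ∈ U` meets some fibre in an infinite set, since
otherwise `B ⊆* e n` for all `n`. Hence the set of points whose fibre meets `B` in an infinite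
set lies in `V`, and it is contained in every `Y` with `B ⊆* g⁻¹ Y`: so `Y ↦ g⁻¹ Y` is Tukey.
-/

theorem exists_seq_of_not_isPPoint {U : Ultrafilter ℕ} (hU : ¬ IsPPoint U) :
    ∃ e : ℕ → Set ℕ, (∀ n, e n ∈ U) ∧ ∀ B ∈ U, ∃ n, (B \ e n).Infinite := by
  simp only [IsPPoint] at hU
  push Not at hU
  obtain ⟨S, hS, hSU, hSunb⟩ := hU
  have hSne : S.Nonempty := by
    obtain ⟨A, hA, -⟩ := hSunb Set.univ Filter.univ_mem
    exact ⟨A, hA⟩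
  obtain ⟨e, rfl⟩ := hS.exists_eq_range hSne
  refine ⟨e, fun n => hSU _ (Set.mem_range_self n), fun B hB => ?_⟩
  obtain ⟨_, ⟨n, rfl⟩, hn⟩ := hSunb B hB
  exact ⟨n, hn⟩

section FirstMiss

variable {e : ℕ → Set ℕ} {x : ℕ}

open Classical in
noncomputable def firstMiss (e : ℕ → Set ℕ) (x : ℕ) : ℕ :=
  if h : ∃ n, x ∉ e n then Nat.find h + 1 else 0

theorem firstMiss_le_succ {n : ℕ} (h : x ∉ e n) : firstMiss e x ≤ n + 1 := by
  classical
  rw [firstMiss, dif_pos ⟨n, h⟩]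
  exact Nat.succ_le_succ (Nat.find_min' _ h)

theorem mem_of_firstMiss_eq_zero (h : firstMiss e x = 0) (n : ℕ) : x ∈ e n := by
  classical
  by_contra hn
  rw [firstMiss, dif_pos ⟨n, hn⟩] at h
  exact Nat.succ_ne_zero _ h

theorem notMem_of_firstMiss_eq_succ {m : ℕ} (h : firstMiss e x = m + 1) : x ∉ e m := by
  classical
  unfold firstMiss at h
  split_ifs at h with hx
  exact Nat.succ_injective h ▸ Nat.find_spec hx

variable {U : Ultrafilter ℕ}

theorem nonprincipal_map_firstMiss (heU : ∀ n, e n ∈ U)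
    (he : ∀ B ∈ U, ∃ n, (B \ e n).Infinite) : Nonprincipal (U.map (firstMiss e)) := by
  intro a ha
  have hfiber : firstMiss e ⁻¹' {a} ∈ U := by
    rw [← Ultrafilter.mem_map, ha]
    exact Ultrafilter.mem_pure.mpr rfl
  cases a with
  | zero =>
    obtain ⟨n, hn⟩ := he _ hfiber
    refine hn (Set.Finite.subset Set.finite_empty fun x hx => hx.2 ?_)
    exact mem_of_firstMiss_eq_zero hx.1 n
  | succ m =>
    have hdisj : firstMiss e ⁻¹' {m + 1} ∩ e m = ∅ :=
      Set.eq_empty_of_forall_notMem fun x hx => notMem_of_firstMiss_eq_succ hx.1 hx.2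
    exact Filter.empty_notMem (U : Filter ℕ) (hdisj ▸ Filter.inter_mem hfiber (heU m))

theorem exists_infinite_inter_fiber_firstMiss (he : ∀ B ∈ U, ∃ n, (B \ e n).Infinite)
    {B : Set ℕ} (hB : B ∈ U) : ∃ y, (B ∩ firstMiss e ⁻¹' {y}).Infinite := by
  by_contra! hfin
  obtain ⟨n, hn⟩ := he B hB
  refine hn (((Set.finite_Iic (n + 1)).biUnion fun y _ => hfin y).subset fun x hx => ?_)
  exact Set.mem_biUnion (firstMiss_le_succ hx.2) ⟨hx.1, rfl⟩

end FirstMiss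

section TukeyMap

variable {U : Ultrafilter ℕ} {g : ℕ → ℕ}

def infiniteFibers (g : ℕ → ℕ) (B : Set ℕ) : Set ℕ :=
  {y | (B ∩ g ⁻¹' {y}).Infinite}

theorem infiniteFibers_mem_map (hg : ∀ B ∈ U, ∃ y, (B ∩ g ⁻¹' {y}).Infinite)
    {B : Set ℕ} (hB : B ∈ U) : infiniteFibers g B ∈ U.map g := by
  rw [Ultrafilter.mem_map]
  by_contra hC
  obtain ⟨y, hy⟩ := hg _ (Filter.inter_mem hB (Ultrafilter.compl_mem_iff_notMem.mpr hC))
  obtain ⟨x, ⟨-, hxC⟩, rfl⟩ := hy.nonempty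
  exact hxC (hy.mono fun z hz => ⟨hz.1.1, hz.2⟩)

theorem infiniteFibers_subset {B Y : Set ℕ} (h : (B \ g ⁻¹' Y).Finite) :
    infiniteFibers g B ⊆ Y := by
  intro y hy
  obtain ⟨x, ⟨hxB, rfl⟩, hxY⟩ := (hy.sdiff h).nonempty
  by_contra hgx
  exact hxY ⟨hxB, hgx⟩

theorem tukeyLE_revIncl_map (hg : ∀ B ∈ U, ∃ y, (B ∩ g ⁻¹' {y}).Infinite) :
    TukeyLE (revIncl (U.map g)) (revAlmostIncl U) := by
  refine ⟨fun Y => ⟨g ⁻¹' Y.1, Ultrafilter.mem_map.mp Y.2⟩, fun T hT hbdd => hT ?_⟩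
  obtain ⟨⟨B, hB⟩, hBT⟩ := hbdd
  exact ⟨⟨infiniteFibers g B, infiniteFibers_mem_map hg hB⟩,
    fun Y hY => infiniteFibers_subset (hBT _ ⟨Y, hY, rfl⟩)⟩

end TukeyMap

theorem stmt14_general (U : Ultrafilter ℕ) (hnp : ¬ IsPPoint U) :
    ∃ V : Ultrafilter ℕ, Nonprincipal V ∧ TukeyLE (revIncl V) (revAlmostIncl U) := by
  obtain ⟨e, heU, he⟩ := exists_seq_of_not_isPPoint hnp
  exact ⟨U.map (firstMiss e), nonprincipal_map_firstMiss heU he,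
    tukeyLE_revIncl_map fun _ hB => exists_infinite_inter_fiber_firstMiss he hB⟩

/-- If `U` is a nonprincipal non-P-point, then there is a nonprincipal ultrafilter `V`
with `⟨V, ⊇⟩ ≤_T ⟨U, ⊇*⟩`. -/
theorem stmt14 (U : Ultrafilter ℕ) (hU : Nonprincipal U) (hnp : ¬ IsPPoint U) :
    ∃ V : Ultrafilter ℕ, Nonprincipal V ∧ TukeyLE (revIncl V) (revAlmostIncl U) :=
  stmt14_general U hnp
end

section
/- Let Q be a directed set that is the union of countably many ω₁-directed subsets (subsets in which every countable subset has an upper bound within that subset). Then for every nonprincipal ultrafilter U on ω, ⟨U, ⊇*⟩ is not Tukey equivalent to ω × Q. -/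
open Cardinal

/-!
If every countable subset of `⟨U, ⊇*⟩` is bounded, then `ω × Q` cannot Tukey-reduce to it,
because the countable set `ω × {q}` is unbounded.

Otherwise a countable unbounded family in `U` yields a map `π : ω → ω` tending to infinity
along `U` such that every member of `U` meets some fibre of `π` in an infinite set. Cover
`ω × Q` by the countably many countably-bounded pieces `{n} × Qₘ`. Since a Tukey map sends
unbounded sets to unbounded sets, for each piece `j` and each `m` there is `β j m` such that
every `X ∈ U` mapped into piece `j` meets `π⁻¹[m, β j m)` in an infinite set. A diagonal
sequence of blocks, split by parity, gives `B` with `π⁻¹ B ∈ U` which misses an interval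
`[m, β j m)` for every `j`; so `π⁻¹ B` can lie in no piece, a contradiction.
-/

open Set Filter

section Diagonal

def diagSeq (β : ℕ → ℕ → ℕ) : ℕ → ℕ
  | 0 => 0
  | i + 1 => diagSeq β i + 1 + ∑ j ∈ Finset.range (i + 1), β j (diagSeq β i)

lemma diagSeq_strictMono (β : ℕ → ℕ → ℕ) : StrictMono (diagSeq β) :=
  strictMono_nat_of_lt_succ fun i => by simp only [diagSeq]; omega

lemma le_diagSeq_succ (β : ℕ → ℕ → ℕ) {i j : ℕ} (hji : j ≤ i) :
    β j (diagSeq β i) ≤ diagSeq β (i + 1) := by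
  have : β j (diagSeq β i) ≤ ∑ k ∈ Finset.range (i + 1), β k (diagSeq β i) :=
    Finset.single_le_sum (f := fun k => β k (diagSeq β i)) (fun _ _ => Nat.zero_le _)
      (Finset.mem_range.2 (Nat.lt_succ_of_le hji))
  simp only [diagSeq]
  omega

lemma findGreatest_le_eq_of_mem_Ico {y : ℕ → ℕ} (hy : StrictMono y) {i s : ℕ}
    (hs : s ∈ Ico (y i) (y (i + 1))) : Nat.findGreatest (fun k => y k ≤ s) s = i := by
  refine Nat.findGreatest_eq_iff.2
    ⟨(hy.id_le i).trans hs.1, fun _ => hs.1, fun k hik _ hk => ?_⟩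
  exact absurd (hs.2.trans_le ((hy.monotone hik).trans hk)) (lt_irrefl s)

/-- The blocks `[yᵢ, yᵢ₊₁)` of the diagonal sequence are long enough to contain
`[yᵢ, β j yᵢ)` for all `j ≤ i`; the union of the even blocks or that of the odd blocks
is in `V`, and it misses every block of the other parity. -/
theorem Ultrafilter.exists_mem_forall_exists_disjoint_Ico (V : Ultrafilter ℕ)
    (β : ℕ → ℕ → ℕ) : ∃ B ∈ V, ∀ j, ∃ m, Disjoint (Ico m (β j m)) B := by
  set y := diagSeq β
  have block_eq : ∀ {i j s}, j ≤ i → s ∈ Ico (y i) (β j (y i)) →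
      Nat.findGreatest (fun k => y k ≤ s) s = i := fun hji hs =>
    findGreatest_le_eq_of_mem_Ico (diagSeq_strictMono β)
      ⟨hs.1, hs.2.trans_le (le_diagSeq_succ β hji)⟩
  set B := {s | Even (Nat.findGreatest (fun k => y k ≤ s) s)}
  rcases V.mem_or_compl_mem B with hB | hB
  · refine ⟨B, hB, fun j => ⟨y (2 * j + 1), Set.disjoint_left.2 fun s hs hsB => ?_⟩⟩
    exact Nat.not_even_iff_odd.2 (odd_two_mul_add_one j) (block_eq (by omega) hs ▸ hsB)
  · refine ⟨Bᶜ, hB, fun j => ⟨y (2 * j), Set.disjoint_left.2 fun s hs hsB => ?_⟩⟩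
    exact hsB (show Even _ from block_eq (by omega) hs ▸ even_two_mul j)

end Diagonal

section Tukey

variable {α β : Type*} {ra : α → α → Prop} {rb : β → β → Prop}

lemma IsTukeyMap.tBounded_of_tBounded_image {f : α → β} (hf : IsTukeyMap ra rb f) {S : Set α}
    (h : TBounded rb (f '' S)) : TBounded ra S :=
  not_not.1 fun hS => hf S hS h

theorem not_tukeyLE_of_forall_tBounded_range (hα : ∀ c : ℕ → α, TBounded ra (range c))
    (x : ℕ → β) (hx : ¬ TBounded rb (range x)) : ¬ TukeyLE rb ra := by
  rintro ⟨g, hg⟩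
  exact hg _ hx (range_comp g x ▸ hα (g ∘ x))

def SigmaCountablyBounded (rb : β → β → Prop) : Prop :=
  ∃ P : ℕ → Set β, (∀ b, ∃ j, b ∈ P j) ∧
    ∀ j, ∀ x : ℕ → β, (∀ n, x n ∈ P j) → TBounded rb (range x)

theorem sigmaCountablyBounded_prod {Q : Type*} (r : Q → Q → Prop)
    (Qn : ℕ → Set Q) (hcov : (⋃ n, Qn n) = Set.univ)
    (hdir : ∀ n, ∀ S ⊆ Qn n, S.Countable → ∃ b ∈ Qn n, ∀ x ∈ S, r x b) :
    SigmaCountablyBounded (fun a b : ℕ × Q => a.1 ≤ b.1 ∧ r a.2 b.2) := by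
  refine ⟨fun j => {(Nat.unpair j).1} ×ˢ Qn (Nat.unpair j).2, fun p => ?_, fun j x hx => ?_⟩
  · obtain ⟨m, hm⟩ := mem_iUnion.1 (hcov ▸ mem_univ p.2)
    exact ⟨Nat.pair p.1 m, by simp [hm]⟩
  · obtain ⟨b, -, hb⟩ := hdir _ (range (Prod.snd ∘ x))
      (range_subset_iff.2 fun n => (hx n).2) (countable_range _)
    refine ⟨((Nat.unpair j).1, b), ?_⟩
    rintro _ ⟨n, rfl⟩
    exact ⟨(hx n).1.le, hb _ ⟨n, rfl⟩⟩

end Tukey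

section NotPPoint

variable {U : Ultrafilter ℕ} {π : ℕ → ℕ}

/-- `π x` is the first index `k` with `x ∉ c k`; it is `0` (junk) when `x` lies in every
`c k`, which is harmless because `⋂ k, c k ∉ U`. -/
theorem exists_tendsto_forall_infinite_inter_fiber (c : ℕ → {A : Set ℕ // A ∈ U})
    (hc : ¬ TBounded (revAlmostIncl U) (range c)) :
    ∃ π : ℕ → ℕ, Tendsto π U atTop ∧ ∀ A ∈ U, ∃ s, (A ∩ π ⁻¹' {s}).Infinite := by
  refine ⟨fun x => sInf {k | x ∉ (c k : Set ℕ)}, ?_, fun A hA => ?_⟩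
  · have hInter : (⋂ k, (c k : Set ℕ)) ∉ U := fun h => hc ⟨⟨_, h⟩, by
      rintro _ ⟨k, rfl⟩
      simp [revAlmostIncl, sdiff_eq_empty.2 (iInter_subset _ k)]⟩
    refine tendsto_atTop.2 fun k => ?_
    filter_upwards [(biInter_finset_mem (Finset.range k)).2 fun i _ => (c i).2,
      Ultrafilter.compl_mem_iff_notMem.2 hInter] with x hx hx'
    obtain ⟨i, hi⟩ : ∃ i, x ∉ (c i : Set ℕ) := by simpa using hx'
    refine le_csInf ⟨i, hi⟩ fun b hb => not_lt.1 fun hbk => hb ?_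
    exact mem_iInter₂.1 hx b (Finset.mem_range.2 hbk)
  · by_contra! h
    refine hc ⟨⟨A, hA⟩, ?_⟩
    rintro _ ⟨k, rfl⟩
    refine ((finite_Iic k).biUnion fun s _ => h s).subset ?_
    rintro x ⟨hxA, hxk⟩
    exact mem_biUnion (Nat.sInf_le hxk) ⟨hxA, rfl⟩

variable (hπ : Tendsto π U atTop) (hfib : ∀ A ∈ U, ∃ s, (A ∩ π ⁻¹' {s}).Infinite)
include hπ hfib

lemma exists_infinite_inter_preimage_Ico_of_mem {A : Set ℕ} (hA : A ∈ U) (m : ℕ) :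
    ∃ R, (A ∩ π ⁻¹' Ico m R).Infinite := by
  obtain ⟨s, hs⟩ := hfib _ (inter_mem hA (tendsto_atTop.1 hπ m))
  refine ⟨s + 1, hs.mono ?_⟩
  rintro x ⟨⟨hxA, hxm⟩, hxs⟩
  exact ⟨hxA, hxm, Nat.lt_succ_of_le (le_of_eq hxs)⟩

/-- Otherwise countably many `X ∈ U` with images in `P` would miss `π⁻¹[m, R)` up to finite
sets for every `R`; their images are bounded, so the `X`'s have a bound in `U`, which then
meets every `π⁻¹[m, R)` in a finite set. -/
theorem IsTukeyMap.exists_infinite_inter_preimage_Ico {f : {A : Set ℕ // A ∈ U} → β}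
    {rb : β → β → Prop} (hf : IsTukeyMap (revAlmostIncl U) rb f) {P : Set β}
    (hP : ∀ x : ℕ → β, (∀ n, x n ∈ P) → TBounded rb (range x)) (m : ℕ) :
    ∃ R, ∀ X : {A : Set ℕ // A ∈ U}, f X ∈ P →
      ((X : Set ℕ) ∩ π ⁻¹' Ico m R).Infinite := by
  by_contra! h
  choose X hXP hXfin using h
  obtain ⟨B, hB⟩ := hf.tBounded_of_tBounded_image (S := range X)
    (range_comp f X ▸ hP _ hXP)
  obtain ⟨R, hR⟩ := exists_infinite_inter_preimage_Ico_of_mem hπ hfib B.2 m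
  refine hR (((hB _ ⟨R, rfl⟩).union (hXfin R)).subset ?_)
  rintro x ⟨hxB, hxI⟩
  by_cases hxX : x ∈ (X R : Set ℕ)
  · exact Or.inr ⟨hxX, hxI⟩
  · exact Or.inl ⟨hxB, hxX⟩

end NotPPoint

theorem not_tukeyLE_revAlmostIncl_of_not_tBounded {β : Type*} {rb : β → β → Prop}
    (U : Ultrafilter ℕ) (c : ℕ → {A : Set ℕ // A ∈ U})
    (hc : ¬ TBounded (revAlmostIncl U) (range c)) (hβ : SigmaCountablyBounded rb) :
    ¬ TukeyLE (revAlmostIncl U) rb := by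
  rintro ⟨f, hf⟩
  obtain ⟨P, hPcov, hPb⟩ := hβ
  obtain ⟨π, hπ, hfib⟩ := exists_tendsto_forall_infinite_inter_fiber c hc
  choose R hR using fun j => hf.exists_infinite_inter_preimage_Ico hπ hfib (hPb j)
  obtain ⟨B, hBU, hB⟩ := (U.map π).exists_mem_forall_exists_disjoint_Ico R
  obtain ⟨j, hj⟩ := hPcov (f ⟨π ⁻¹' B, hBU⟩)
  obtain ⟨m, hm⟩ := hB j
  refine hR j m _ hj (finite_empty.subset ?_)
  rintro x ⟨hxB, hxI⟩
  exact Set.disjoint_left.1 hm hxI hxB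

/-- If a directed set `Q` is a countable union of `ω₁`-directed subsets, then no
`⟨U, ⊇*⟩` for a nonprincipal ultrafilter `U` on `ω` is Tukey equivalent to `ω × Q`. -/
theorem stmt15 {Q : Type*} (r : Q → Q → Prop) (hQ : IsDirectedSet r)
    (Qn : ℕ → Set Q) (hcov : (⋃ n, Qn n) = Set.univ)
    (hdir : ∀ n, ∀ S ⊆ Qn n, S.Countable → ∃ b ∈ Qn n, ∀ x ∈ S, r x b) :
    ∀ U : Ultrafilter ℕ, Nonprincipal U →
      ¬ TukeyEquiv (revAlmostIncl U) (fun a b : ℕ × Q => a.1 ≤ b.1 ∧ r a.2 b.2) := by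
  rintro U - ⟨hUQ, hQU⟩
  by_cases hP : ∀ c : ℕ → {A : Set ℕ // A ∈ U}, TBounded (revAlmostIncl U) (range c)
  · obtain ⟨q₀⟩ := hQ.nonempty
    refine not_tukeyLE_of_forall_tBounded_range hP (fun i => (i, q₀)) ?_ hQU
    rintro ⟨b, hb⟩
    exact absurd (hb _ ⟨b.1 + 1, rfl⟩).1 (Nat.not_succ_le_self b.1)
  · obtain ⟨c, hc⟩ := not_forall.1 hP
    exact not_tukeyLE_revAlmostIncl_of_not_tBounded U c hc
      (sigmaCountablyBounded_prod r Qn hcov hdir) hUQ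
end

section
/- Let Q be a preorder and C an unbounded cofinal subset of Q. Then there exists a cofinal subset A of Q with A ⊆ C such that A is |C|-like, i.e., every subset of A that is bounded in Q has cardinality less than |C|. -/
open Cardinal

/-- Take `A = {g (m q)}`, where `m q` is the least index with `r q (g (m q))`: by transitivity and
minimality, a bound `b` confines the indices of a subset of `A` to `Iic (m b)`. -/
theorem exists_cofinal_subset_forall_bounded_subset_image_Iic {ι Q : Type*} [LinearOrder ι]
    [WellFoundedLT ι] (r : Q → Q → Prop) (htrans : ∀ {x y z}, r x y → r y z → r x z)
    (g : ι → Q) (hg : TCofinal r (Set.range g)) :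
    ∃ A ⊆ Set.range g, TCofinal r A ∧ ∀ S ⊆ A, TBounded r S → ∃ i, S ⊆ g '' Set.Iic i := by
  have hne : ∀ q, {i | r q (g i)}.Nonempty := fun q => by
    obtain ⟨_, ⟨i, rfl⟩, hi⟩ := hg q
    exact ⟨i, hi⟩
  let m : Q → ι := fun q => wellFounded_lt.min {i | r q (g i)} (hne q)
  have hm : ∀ q, r q (g (m q)) := fun q => wellFounded_lt.min_mem _ (hne q)
  refine ⟨Set.range (g ∘ m), Set.range_comp_subset_range m g, fun q => ⟨g (m q), ⟨q, rfl⟩, hm q⟩,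
    ?_⟩
  rintro S hSA ⟨b, hb⟩
  refine ⟨m b, fun x hx => ?_⟩
  obtain ⟨q, rfl⟩ := hSA hx
  exact ⟨m q, (wellFounded_lt (α := ι)).min_le (htrans (htrans (hm q) (hb _ hx)) (hm b)), rfl⟩

theorem Set.Finite.mk_lt_of_tBounded_subset {Q : Type*} {r : Q → Q → Prop} {C S : Set Q}
    (hC : C.Finite) (hunb : ¬ TBounded r C) (hS : S ⊆ C) (hSb : TBounded r S) : #S < #C :=
  card_lt_card_of_right_finite hC (hS.ssubset_of_ne (by rintro rfl; exact hunb hSb))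

theorem stmt16_general {Q : Type*} (r : Q → Q → Prop)
    (htrans : ∀ {x y z}, r x y → r y z → r x z)
    (C : Set Q) (hcof : TCofinal r C) (hunb : ¬ TBounded r C) :
    ∃ A ⊆ C, TCofinal r A ∧ ∀ S : Set Q, S ⊆ A → TBounded r S → #S < #C := by
  rcases C.finite_or_infinite with hfin | hinf
  · exact ⟨C, subset_rfl, hcof, fun S hS hSb => hfin.mk_lt_of_tBounded_subset hunb hS hSb⟩
  have := hinf.to_subtype
  -- Well-order `C` in order type its initial ordinal, so that proper initial segments are small.
  obtain ⟨_, _, hord⟩ := exists_ord_eq_type_lt C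
  obtain ⟨A, hAC, hAcof, hA⟩ := exists_cofinal_subset_forall_bounded_subset_image_Iic r htrans
    ((↑) : C → Q) (by rwa [Subtype.range_coe])
  refine ⟨A, by rwa [Subtype.range_coe] at hAC, hAcof, fun S hSA hSb => ?_⟩
  obtain ⟨i, hi⟩ := hA S hSA hSb
  calc #S ≤ #(Set.Iic i) := (mk_le_mk_of_subset hi).trans mk_image_le
    _ < #C := mk_Iic_lt i hord (aleph0_le_mk C)

/-- Every unbounded cofinal subset `C` of a preorder contains a cofinal subset `A` that
is `|C|`-like: every subset of `A` bounded in `Q` has cardinality less than `|C|`. -/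
theorem stmt16 {Q : Type*} (r : Q → Q → Prop)
    (hrefl : ∀ x, r x x) (htrans : ∀ {x y z}, r x y → r y z → r x z)
    (C : Set Q) (hcof : TCofinal r C) (hunb : ¬ TBounded r C) :
    ∃ A ⊆ C, TCofinal r A ∧ ∀ S : Set Q, S ⊆ A → TBounded r S → #S < #C :=
  stmt16_general r htrans C hcof hunb
end
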